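/- arXiv:2012.02916 — 2 statements merged into one kernel-verified Lean document; each statement's English description precedes it below -/
import Mathlib

section
/- Let G=(V,E) be a graph and let each player v have investment cost c(v)=2 and externality function g_v(x)=x for x≤3 and g_v(x)=x+1 for 4≤x≤deg(v)+1. Then a nonempty set H⊆V is a pure-strategy Nash equilibrium profile of the resulting binary networked public goods game if and only if the induced subgraph G[H] is 3-regular. -/
attribute [local instance] Classical.propDecidable

noncomputable section

variable {V : Type*}

/-- Number of investing closed neighbors of `v` under profile `s`. -/
def cNbr (G : SimpleGraph V) (s : Finset V) (v : V) : ℕ :=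
  (s.filter fun u => G.Adj v u ∨ u = v).card

/-- Payoff of player `v` under profile `s` in the BNPG on `G` with
externality functions `g` and costs `c`. -/
def payoff (G : SimpleGraph V) (g : V → ℕ → ℝ) (c : V → ℝ) (s : Finset V) (v : V) : ℝ :=
  g v (cNbr G s v) - (if v ∈ s then c v else 0)

/-- The profile obtained from `s` by flipping the action of `v`. -/
def flipProfile (s : Finset V) (v : V) : Finset V :=
  if v ∈ s then s.erase v else insert v s

/-- Pure-strategy Nash equilibrium: nobody gains by flipping her own action. -/
def IsPSNE (G : SimpleGraph V) (g : V → ℕ → ℝ) (c : V → ℝ) (s : Finset V) : Prop :=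
  ∀ v, payoff G g c (flipProfile s v) v ≤ payoff G g c s v

/-- Utilitarian social welfare. -/
def USW (G : SimpleGraph V) [Fintype V] (g : V → ℕ → ℝ) (c : V → ℝ) (s : Finset V) : ℝ :=
  ∑ v, payoff G g c s v

/-- Egalitarian social welfare: the minimum payoff of a player. -/
def ESW (G : SimpleGraph V) (g : V → ℕ → ℝ) (c : V → ℝ) (s : Finset V) : ℝ :=
  ⨅ v, payoff G g c s v

lemma cNbr_eq (G : SimpleGraph V) (s : Finset V) (v : V) :
    cNbr G s v = (s.filter fun u => G.Adj v u).card + (if v ∈ s then 1 else 0) := by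
  classical
  unfold cNbr
  by_cases hv : v ∈ s
  · rw [if_pos hv]
    have : s.filter (fun u => G.Adj v u ∨ u = v) = insert v (s.filter fun u => G.Adj v u) := by
      ext u
      simp only [Finset.mem_filter, Finset.mem_insert]
      constructor
      · rintro ⟨hu, h | h⟩
        · exact Or.inr ⟨hu, h⟩
        · exact Or.inl h
      · rintro (rfl | ⟨hu, h⟩)
        · exact ⟨hv, Or.inr rfl⟩
        · exact ⟨hu, Or.inl h⟩
    rw [this, Finset.card_insert_of_notMem]
    simp [G.irrefl]
  · rw [if_neg hv]
    simp only [Nat.add_zero]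
    congr 1
    ext u
    simp only [Finset.mem_filter, and_congr_right_iff]
    intro hu
    constructor
    · rintro (h | rfl)
      · exact h
      · exact absurd hu hv
    · exact Or.inl

lemma filter_erase_adj (G : SimpleGraph V) (s : Finset V) (v : V) :
    ((s.erase v).filter fun u => G.Adj v u) = s.filter fun u => G.Adj v u := by
  classical
  ext u
  simp only [Finset.mem_filter, Finset.mem_erase]
  constructor
  · rintro ⟨⟨_, hu⟩, h⟩; exact ⟨hu, h⟩
  · rintro ⟨hu, h⟩; exact ⟨⟨fun e => G.irrefl (e ▸ h), hu⟩, h⟩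

lemma filter_insert_adj (G : SimpleGraph V) (s : Finset V) (v : V) :
    ((insert v s).filter fun u => G.Adj v u) = s.filter fun u => G.Adj v u := by
  classical
  rw [Finset.filter_insert, if_neg (G.irrefl)]

/-- with cost 2 and externality g(x)=x for x ≤ 3 and g(x)=x+1 otherwise,
a nonempty profile H is a PSNE iff the induced subgraph G[H] is 3-regular. -/
theorem stmt_0 (G : SimpleGraph V) (H : Finset V) (hH : H.Nonempty) :
    IsPSNE G (fun _ x => if x ≤ 3 then (x : ℝ) else (x : ℝ) + 1) (fun _ => 2) H ↔
      ∀ v ∈ H, (H.filter fun u => G.Adj v u).card = 3 := by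
  classical
  constructor
  · intro h v hv
    have hcond := h v
    set d := (H.filter fun u => G.Adj v u).card with hd
    have hflip : flipProfile H v = H.erase v := if_pos hv
    have h1 : cNbr G H v = d + 1 := by rw [cNbr_eq, if_pos hv]
    have h2 : cNbr G (H.erase v) v = d := by
      rw [cNbr_eq, if_neg (Finset.notMem_erase v H), filter_erase_adj, Nat.add_zero]
    rw [hflip] at hcond
    unfold payoff at hcond
    rw [h1, h2, if_pos hv, if_neg (Finset.notMem_erase v H)] at hcond
    simp only at hcond
    by_cases hle : d ≤ 3
    · by_cases hle' : d + 1 ≤ 3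
      · rw [if_pos hle, if_pos hle'] at hcond
        exfalso
        push_cast at hcond
        linarith
      · rw [if_pos hle, if_neg hle'] at hcond
        omega
    · have hle' : ¬ (d + 1 ≤ 3) := by omega
      rw [if_neg hle, if_neg hle'] at hcond
      exfalso
      push_cast at hcond
      linarith
  · intro h v
    unfold payoff
    by_cases hv : v ∈ H
    · have hflip : flipProfile H v = H.erase v := if_pos hv
      have hd := h v hv
      have h1 : cNbr G H v = 4 := by rw [cNbr_eq, if_pos hv, hd]
      have h2 : cNbr G (H.erase v) v = 3 := by
        rw [cNbr_eq, if_neg (Finset.notMem_erase v H), filter_erase_adj, hd]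
      rw [hflip, h1, h2, if_pos hv, if_neg (Finset.notMem_erase v H)]
      norm_num
    · have hflip : flipProfile H v = insert v H := if_neg hv
      set d := (H.filter fun u => G.Adj v u).card with hd
      have h1 : cNbr G H v = d := by rw [cNbr_eq, if_neg hv, Nat.add_zero]
      have h2 : cNbr G (insert v H) v = d + 1 := by
        rw [cNbr_eq, if_pos (Finset.mem_insert_self v H), filter_insert_adj]
      rw [hflip, h1, h2, if_neg hv, if_pos (Finset.mem_insert_self v H)]
      simp only
      by_cases hle : d ≤ 3
      · by_cases hle' : d + 1 ≤ 3
        · rw [if_pos hle, if_pos hle']; push_cast; linarith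
        · rw [if_pos hle, if_neg hle']
          have : d = 3 := by omega
          rw [this]; norm_num
      · have hle' : ¬ (d + 1 ≤ 3) := by omega
        rw [if_neg hle, if_neg hle']; push_cast; linarith

end
end

section
/- Let G=(B⊎R, E_G) be a bipartite graph with no isolated vertices and κ a positive integer. Build a BNPG on the graph obtained from G by adding a vertex v* adjacent to all of B, with: g_v(0)=0 and g_v(x)=1 for x≥1 and c(v)=1 for v∈R; g_v(0)=1, g_v(1)=2, g_v(x)=0 for x≥2, c(v)=1 for v∈B; g_{v*}(x)=1 for x≤κ, g_{v*}(x)=0 for x>κ, c(v*)=1. Then there exists a profile with egalitarian social welfare at least 1 if and only if there exists B'⊆B with |B'|≤κ dominating R (every vertex of R has a neighbor in B'). -/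
attribute [local instance] Classical.propDecidable

noncomputable section

variable {V : Type*}

variable {B R : Type*} [Fintype B] [Fintype R]

/-- Players of the RBDS reduction: blue players, red players, and the apex v*. -/
abbrev RBPlayers (B R : Type*) := B ⊕ (R ⊕ Unit)

/-- One-directional adjacency of the RBDS reduction network, for a bipartite graph
with edge relation E between B and R. -/
def rbRel (E : B → R → Prop) : RBPlayers B R → RBPlayers B R → Prop
  | Sum.inl b, Sum.inr (Sum.inl r) => E b r
  | Sum.inl _, Sum.inr (Sum.inr _) => True
  | _, _ => False

/-- The RBDS reduction network: G together with v* adjacent to all of B. -/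
def rbNet (E : B → R → Prop) : SimpleGraph (RBPlayers B R) where
  Adj a b := rbRel E a b ∨ rbRel E b a
  symm := ⟨fun _ _ h => h.symm⟩
  loopless := ⟨by
    intro a h
    rcases h with h | h <;> rcases a with b | r | u <;> exact h⟩

/-- Externality functions of the RBDS reduction. -/
def rbG (κ : ℕ) : RBPlayers B R → ℕ → ℝ
  | Sum.inl _, x => if x = 0 then 1 else if x = 1 then 2 else 0
  | Sum.inr (Sum.inl _), x => if x = 0 then 0 else 1
  | Sum.inr (Sum.inr _), x => if x ≤ κ then 1 else 0

/-!
Red players and `v*` never receive more than their cost, so in a profile where every payoff is at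
least `1` only blue players invest. If the investing players form a set `B'` of blue vertices, each
blue player gets exactly `1` (`g(0) = 1` when idle and `g(1) - 1 = 1` when investing, as `B` is
independent), a red player gets `1` iff it has a neighbour in `B'`, and `v*` gets `1` iff
`|B'| ≤ κ`.
-/

theorem payoff_nonpos_of_mem {G : SimpleGraph V} {g : V → ℕ → ℝ} {c : V → ℝ} {s : Finset V}
    {v : V} (hg : ∀ n, g v n ≤ c v) (hv : v ∈ s) : payoff G g c s v ≤ 0 := by
  rw [payoff, if_pos hv]
  linarith [hg (cNbr G s v)]

theorem le_ESW_iff [Finite V] [Nonempty V] {G : SimpleGraph V} {g : V → ℕ → ℝ} {c : V → ℝ}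
    {s : Finset V} {a : ℝ} : a ≤ ESW G g c s ↔ ∀ v, a ≤ payoff G g c s v :=
  le_ciInf_iff (Set.finite_range _).bddBelow

section

open Finset

-- fresh `B R`, without the `Fintype` instances of the outer ones
variable {B R : Type*} {E : B → R → Prop} {κ : ℕ} {b : B} {r : R} {u : Unit}

@[simp] theorem rbNet_adj_inl_inl {b' : B} : ¬ (rbNet E).Adj (.inl b) (.inl b') := by
  simp [rbNet, rbRel]

@[simp] theorem rbNet_adj_red_inl : (rbNet E).Adj (.inr (.inl r)) (.inl b) ↔ E b r := by
  simp [rbNet, rbRel]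

@[simp] theorem rbNet_adj_apex_inl : (rbNet E).Adj (.inr (.inr u)) (.inl b) := by
  simp [rbNet, rbRel]

theorem cNbr_map_inl (B' : Finset B) (v : RBPlayers B R) :
    cNbr (rbNet E) (B'.map .inl) v = #{b ∈ B' | (rbNet E).Adj v (.inl b) ∨ .inl b = v} := by
  simp only [cNbr, filter_map, card_map]
  congr 1
  ext
  simp

theorem cNbr_map_inl_inl (B' : Finset B) :
    cNbr (rbNet E) (B'.map .inl) (.inl b) = if b ∈ B' then 1 else 0 := by
  simp only [cNbr_map_inl, rbNet_adj_inl_inl, Sum.inl.injEq, false_or]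
  convert congrArg card (filter_eq' B' b) using 1
  split_ifs <;> rfl

theorem cNbr_map_inl_red (B' : Finset B) :
    cNbr (rbNet E) (B'.map .inl) (.inr (.inl r)) = #{b ∈ B' | E b r} := by
  simp [cNbr_map_inl]

theorem cNbr_map_inl_apex (B' : Finset B) :
    cNbr (rbNet E) (B'.map .inl) (.inr (.inr u)) = #B' := by
  simp [cNbr_map_inl]

theorem one_le_rbG_red_iff {n : ℕ} : 1 ≤ rbG (B := B) κ (.inr (.inl r)) n ↔ n ≠ 0 := by
  simp only [rbG]
  split_ifs <;> simp [*]

theorem one_le_rbG_apex_iff {n : ℕ} : 1 ≤ rbG (B := B) (R := R) κ (.inr (.inr u)) n ↔ n ≤ κ := by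
  simp only [rbG]
  split_ifs <;> simp [*]

theorem rbG_inr_le_one (w : R ⊕ Unit) (n : ℕ) : rbG (B := B) κ (.inr w) n ≤ 1 := by
  rcases w with _ | _ <;> simp only [rbG] <;> split_ifs <;> norm_num

theorem payoff_map_inl_inl (B' : Finset B) :
    payoff (rbNet E) (rbG κ) (fun _ => 1) (B'.map .inl) (.inl b) = 1 := by
  by_cases hb : b ∈ B' <;> norm_num [payoff, cNbr_map_inl_inl, rbG, hb]

theorem one_le_payoff_map_inl_red_iff (B' : Finset B) :
    1 ≤ payoff (rbNet E) (rbG κ) (fun _ => 1) (B'.map .inl) (.inr (.inl r)) ↔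
      ∃ b ∈ B', E b r := by
  simp [payoff, cNbr_map_inl_red, one_le_rbG_red_iff, filter_eq_empty_iff]

theorem one_le_payoff_map_inl_apex_iff (B' : Finset B) :
    1 ≤ payoff (rbNet E) (rbG κ) (fun _ => 1) (B'.map .inl) (.inr (.inr u)) ↔ #B' ≤ κ := by
  simp [payoff, cNbr_map_inl_apex, one_le_rbG_apex_iff]

theorem one_le_ESW_map_inl_iff [Finite B] [Finite R] (B' : Finset B) :
    1 ≤ ESW (rbNet E) (rbG κ) (fun _ => 1) (B'.map .inl) ↔
      #B' ≤ κ ∧ ∀ r, ∃ b ∈ B', E b r := by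
  simp [le_ESW_iff, payoff_map_inl_inl, one_le_payoff_map_inl_red_iff,
    one_le_payoff_map_inl_apex_iff, and_comm]

theorem eq_map_inl_toLeft_of_one_le_ESW [Finite B] [Finite R] {s : Finset (RBPlayers B R)}
    (hs : 1 ≤ ESW (rbNet E) (rbG κ) (fun _ => 1) s) : s = s.toLeft.map .inl := by
  ext (b | w)
  · simp
  · have hw : .inr w ∉ s := fun hw => (le_ESW_iff.1 hs (.inr w)).not_gt <|
      (payoff_nonpos_of_mem (rbG_inr_le_one w) hw).trans_lt one_pos
    simp [hw]

end

theorem stmt_6_general (E : B → R → Prop)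
    (κ : ℕ) :
    (∃ s : Finset (RBPlayers B R), 1 ≤ ESW (rbNet E) (rbG κ) (fun _ => 1) s) ↔
      ∃ B' : Finset B, B'.card ≤ κ ∧ ∀ r : R, ∃ b ∈ B', E b r := by
  constructor
  · rintro ⟨s, hs⟩
    rw [eq_map_inl_toLeft_of_one_le_ESW hs, one_le_ESW_map_inl_iff] at hs
    exact ⟨_, hs⟩
  · rintro ⟨B', hB'⟩
    exact ⟨_, (one_le_ESW_map_inl_iff B').2 hB'⟩

/-- there is a profile with egalitarian social welfare at least 1 iff
there is a set B' ⊆ B of at most κ blue vertices dominating R. -/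
theorem stmt_6 (E : B → R → Prop)
    (hnoIsoB : ∀ b, ∃ r, E b r) (hnoIsoR : ∀ r, ∃ b, E b r)
    (κ : ℕ) (hκ : 0 < κ) :
    (∃ s : Finset (RBPlayers B R), 1 ≤ ESW (rbNet E) (rbG κ) (fun _ => 1) s) ↔
      ∃ B' : Finset B, B'.card ≤ κ ∧ ∀ r : R, ∃ b ∈ B', E b r :=
  stmt_6_general E κ

end
end
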